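/- For all real numbers x, y and every natural number n, (x + y)^n = Σ_{q=1}^{n+1} (−1)^{q+1} · C(n+1, q) · (x + (y − q))^n. -/

import Mathlib

lemma alt_sum_zero : ∀ n : ℕ, ∀ N : ℕ, n < N → ∀ t : ℝ,
    ∑ q ∈ Finset.range (N+1), (-1:ℝ)^q * (N.choose q : ℝ) * (t - q)^n = 0 := by
  intro n
  induction n using Nat.strong_induction_on with
  | _ n ih =>
    intro N hn t
    obtain ⟨M, rfl⟩ : ∃ M, N = M + 1 := ⟨N - 1, by omega⟩
    have key : ∑ q ∈ Finset.range (M+2), (-1:ℝ)^q * ((M+1).choose q : ℝ) * (t - q)^n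
        = (∑ q ∈ Finset.range (M+1), (-1:ℝ)^q * (M.choose q : ℝ) * (t - q)^n)
          - (∑ q ∈ Finset.range (M+1), (-1:ℝ)^q * (M.choose q : ℝ) * ((t-1) - q)^n) := by
      rw [Finset.sum_range_succ' (fun q => (-1:ℝ)^q * ((M+1).choose q : ℝ) * (t - q)^n) (M+1)]
      have hsplit : ∀ q ∈ Finset.range (M+1),
          (-1:ℝ)^(q+1) * (((M+1).choose (q+1) : ℕ) : ℝ) * (t - (q+1 : ℕ))^n
          = (-1:ℝ)^(q+1) * (M.choose (q+1) : ℝ) * (t - (q+1 : ℕ))^n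
            + (-(((-1:ℝ)^q * (M.choose q : ℝ) * ((t-1) - q)^n))) := by
        intro q hq
        rw [Nat.choose_succ_succ]
        push_cast
        have : t - ((q:ℝ)+1) = (t-1) - q := by ring
        rw [this]
        ring
      rw [Finset.sum_congr rfl hsplit, Finset.sum_add_distrib, Finset.sum_neg_distrib]
      have h2 : (∑ q ∈ Finset.range (M+1), (-1:ℝ)^(q+1) * (M.choose (q+1) : ℝ) * (t - (q+1:ℕ))^n)
          + (-1:ℝ)^0 * (((M+1).choose 0 : ℕ) : ℝ) * (t - (0:ℕ))^n
          = ∑ q ∈ Finset.range (M+1), (-1:ℝ)^q * (M.choose q : ℝ) * (t - q)^n := by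
        have := Finset.sum_range_succ' (fun q => (-1:ℝ)^q * (M.choose q : ℝ) * (t - q)^n) (M+1)
        rw [Finset.sum_range_succ] at this
        simp only [Nat.choose_succ_self, Nat.cast_zero, mul_zero, zero_mul, add_zero,
          Nat.choose_zero_right] at this ⊢
        rw [this]
      linarith [h2]
    rw [key]
    rw [← Finset.sum_sub_distrib]
    have hterm : ∀ q ∈ Finset.range (M+1),
        (-1:ℝ)^q * (M.choose q : ℝ) * (t - q)^n - (-1:ℝ)^q * (M.choose q : ℝ) * ((t-1) - q)^n
        = ∑ j ∈ Finset.range n, (n.choose j : ℝ) * ((-1:ℝ)^q * (M.choose q : ℝ) * ((t-1) - q)^j) := by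
      intro q hq
      have hpow : (t - q)^n = ∑ j ∈ Finset.range (n+1), ((t-1)-q)^j * (n.choose j : ℝ) := by
        have : t - q = ((t-1)-q) + 1 := by ring
        rw [this, add_pow]
        simp
      rw [hpow, Finset.sum_range_succ]
      simp only [Nat.choose_self, Nat.cast_one, mul_one]
      rw [mul_add, add_sub_cancel_right, Finset.mul_sum]
      apply Finset.sum_congr rfl
      intro j hj
      ring
    rw [Finset.sum_congr rfl hterm, Finset.sum_comm]
    apply Finset.sum_eq_zero
    intro j hj
    rw [← Finset.mul_sum]
    have hj' : j < M := by
      have := Finset.mem_range.mp hj; omega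
    rw [ih j (Finset.mem_range.mp hj) M hj' (t-1)]
    ring

/-- For all real x, y and every natural n,
(x + y)^n = Σ_{q=1}^{n+1} (−1)^{q+1} · C(n+1, q) · (x + (y − q))^n. -/
theorem sap_power_identity (x y : ℝ) (n : ℕ) :
    (x + y) ^ n =
      ∑ q ∈ Finset.Icc 1 (n + 1),
        (-1 : ℝ) ^ (q + 1) * ((n + 1).choose q : ℝ) * (x + (y - q)) ^ n := by
  have h := alt_sum_zero n (n+1) (by omega) (x+y)
  rw [Finset.sum_range_succ' (fun q => (-1:ℝ)^q * ((n+1).choose q : ℝ) * ((x+y) - q)^n) (n+1)] at h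
  simp only [Nat.cast_zero, sub_zero, pow_zero, Nat.choose_zero_right, Nat.cast_one, one_mul,
    mul_one] at h
  have h2 : ∑ q ∈ Finset.Icc 1 (n + 1),
      (-1 : ℝ) ^ (q + 1) * ((n + 1).choose q : ℝ) * (x + (y - q)) ^ n
      = ∑ q ∈ Finset.range (n+1),
      (-1 : ℝ) ^ (q + 2) * ((n + 1).choose (q+1) : ℝ) * (x + (y - (q+1:ℕ))) ^ n := by
    have : Finset.Icc 1 (n+1) = Finset.Ico 1 (n+2) := by
      rw [← Finset.Ico_add_one_right_eq_Icc]; rfl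
    rw [this, Finset.sum_Ico_eq_sum_range]
    apply Finset.sum_congr (by norm_num)
    intro q hq
    have h1 : 1 + q = q + 1 := by omega
    rw [h1]
  rw [h2]
  have h3 : ∀ q ∈ Finset.range (n+1),
      (-1:ℝ)^(q+2) * ((n + 1).choose (q+1) : ℝ) * (x + (y - (q+1:ℕ)))^n
      = -((-1:ℝ)^(q+1) * ((n + 1).choose (q+1) : ℝ) * ((x + y) - ((q+1:ℕ):ℝ))^n) := by
    intro q hq
    rw [pow_succ]
    push_cast
    ring_nf
  rw [Finset.sum_congr rfl h3, Finset.sum_neg_distrib]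
  linarith
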